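/- Let (Ω, 𝒜, μ) be a finite measure space and φ a Young function satisfying the Δ₂-condition. If a sequence of σ-subalgebras {𝒜ₙ} μ-converges to a σ-subalgebra 𝔇 (i.e., for every D ∈ 𝔇 there exist Aₙ ∈ 𝒜ₙ with μ(Aₙ Δ D) → 0), then for every f ∈ L^φ(Ω, 𝔇, μ), E(f | 𝒜ₙ) → f in L^φ norm. -/

import Mathlib

/-!
Since `φ` grows superlinearly, `f ∈ L^φ` is integrable. For `D ∈ 𝔇` and `Aₙ ∈ 𝒜ₙ` with
`μ(Aₙ ∆ D) → 0`, the `L¹`-contraction `E(· | 𝒜ₙ)` fixes `1_{Aₙ}`, so `E(1_D | 𝒜ₙ) → 1_D` in `L¹`;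
by linearity and density of simple functions, `E(f | 𝒜ₙ) → f` in `L¹`.

Norm convergence in `L^φ` follows once `∫ φ(c |E(f | 𝒜ₙ) - f|) → 0` for every `c`. By convexity
and the conditional Jensen inequality these integrands are dominated by
`E(φ(2cf) | 𝒜ₙ) + φ(2cf)`, a uniformly integrable family since `φ(2cf)` is integrable by `Δ₂`.
They tend to `0` in measure, so Vitali's convergence theorem concludes.
-/

open MeasureTheory Filter Topology

def IsYoung (φ : ℝ → ℝ) : Prop :=
  ConvexOn ℝ Set.univ φ ∧ Continuous φ ∧ (∀ x, φ (-x) = φ x) ∧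
    (∀ x, φ x = 0 ↔ x = 0) ∧ Tendsto (fun x => φ x / x) atTop atTop

/-- The Δ₂ condition. -/
def Delta2 (φ : ℝ → ℝ) : Prop := ∃ k > 0, ∃ x₀ > 0, ∀ x ≥ x₀, φ (2 * x) ≤ k * φ x

noncomputable def luxNorm {Ω : Type*} {m : MeasurableSpace Ω} (μ : Measure Ω)
    (φ : ℝ → ℝ) (f : Ω → ℝ) : ℝ :=
  sInf {k : ℝ | 0 < k ∧ ∫ x, φ (|f x| / k) ∂μ ≤ 1}

open scoped ENNReal symmDiff

namespace IsYoung

variable {φ : ℝ → ℝ}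

lemma convexOn (hφ : IsYoung φ) : ConvexOn ℝ Set.univ φ := hφ.1

lemma continuous (hφ : IsYoung φ) : Continuous φ := hφ.2.1

lemma map_neg (hφ : IsYoung φ) (t : ℝ) : φ (-t) = φ t := hφ.2.2.1 t

lemma map_zero (hφ : IsYoung φ) : φ 0 = 0 := (hφ.2.2.2.1 0).2 rfl

lemma tendsto_div_atTop (hφ : IsYoung φ) : Tendsto (fun x => φ x / x) atTop atTop := hφ.2.2.2.2

lemma map_abs (hφ : IsYoung φ) (t : ℝ) : φ |t| = φ t := by
  rcases abs_choice t with h | h <;> rw [h]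
  exact hφ.map_neg t

lemma map_mul_abs (hφ : IsYoung φ) (c t : ℝ) : φ (c * |t|) = φ (c * t) := by
  rw [← hφ.map_abs (c * t), ← hφ.map_abs (c * |t|), abs_mul, abs_mul, abs_abs]

lemma nonneg (hφ : IsYoung φ) (t : ℝ) : 0 ≤ φ t := by
  have h := hφ.convexOn.2 (Set.mem_univ (-t)) (Set.mem_univ t) (by norm_num : (0 : ℝ) ≤ 1 / 2)
    (by norm_num : (0 : ℝ) ≤ 1 / 2) (by norm_num)
  rw [smul_eq_mul, smul_eq_mul, smul_eq_mul, smul_eq_mul, hφ.map_neg,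
    show (1 / 2 : ℝ) * -t + 1 / 2 * t = 0 by ring, hφ.map_zero] at h
  linarith

lemma monotoneOn (hφ : IsYoung φ) : MonotoneOn φ (Set.Ici 0) := by
  intro a ha b _ hab
  rcases (Set.mem_Ici.1 ha).eq_or_lt with rfl | ha
  · rw [hφ.map_zero]
    exact hφ.nonneg b
  · exact hφ.convexOn.le_right_of_left_le'' (Set.mem_univ 0) (Set.mem_univ b) ha hab
      (by rw [hφ.map_zero]; exact hφ.nonneg a)

lemma map_mul_abs_sub_le (hφ : IsYoung φ) (c a b : ℝ) :
    φ (c * |a - b|) ≤ (φ (2 * c * a) + φ (2 * c * b)) / 2 := by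
  have h := hφ.convexOn.2 (Set.mem_univ (2 * c * a)) (Set.mem_univ (-(2 * c * b)))
    (by norm_num : (0 : ℝ) ≤ 1 / 2) (by norm_num : (0 : ℝ) ≤ 1 / 2) (by norm_num)
  rw [smul_eq_mul, smul_eq_mul, smul_eq_mul, smul_eq_mul, hφ.map_neg] at h
  calc φ (c * |a - b|) = φ (1 / 2 * (2 * c * a) + 1 / 2 * -(2 * c * b)) := by
        rw [hφ.map_mul_abs]; ring_nf
    _ ≤ _ := h
    _ = _ := by ring

lemma le_add_map (hφ : IsYoung φ) : ∃ C, ∀ t, 0 ≤ t → t ≤ C + φ t := by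
  obtain ⟨x₁, hx₁⟩ := eventually_atTop.1 (hφ.tendsto_div_atTop.eventually_ge_atTop 1)
  refine ⟨max x₁ 1, fun t ht => ?_⟩
  rcases le_or_gt (max x₁ 1) t with h | h
  · have ht : 0 < t := one_pos.trans_le ((le_max_right _ _).trans h)
    have := (le_div_iff₀ ht).1 (hx₁ t ((le_max_left _ _).trans h))
    linarith [le_max_right x₁ 1]
  · linarith [hφ.nonneg t]

lemma exists_map_two_mul_le (hφ : IsYoung φ) (hΔ : Delta2 φ) :
    ∃ k C, 0 ≤ k ∧ ∀ t, 0 ≤ t → φ (2 * t) ≤ k * φ t + C := by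
  obtain ⟨k, hk, x₀, hx₀, h⟩ := hΔ
  refine ⟨k, φ (2 * x₀), hk.le, fun t ht => ?_⟩
  rcases le_or_gt x₀ t with hxt | hxt
  · linarith [h t hxt, hφ.nonneg (2 * x₀)]
  · have := hφ.monotoneOn (by positivity : (0 : ℝ) ≤ 2 * t) (by positivity : (0 : ℝ) ≤ 2 * x₀)
      (by linarith)
    nlinarith [hφ.nonneg t]

lemma exists_map_mul_le (hφ : IsYoung φ) (hΔ : Delta2 φ) (c : ℝ) :
    ∃ K C, ∀ t, 0 ≤ t → φ (c * t) ≤ K * φ t + C := by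
  obtain ⟨k, C₀, hk, hkC₀⟩ := hφ.exists_map_two_mul_le hΔ
  have pow : ∀ m : ℕ, ∃ K C, ∀ t, 0 ≤ t → φ (2 ^ m * t) ≤ K * φ t + C := by
    intro m
    induction m with
    | zero => exact ⟨1, 0, fun t _ => by simp⟩
    | succ m ih =>
      obtain ⟨K, C, hKC⟩ := ih
      refine ⟨k * K, k * C + C₀, fun t ht => ?_⟩
      calc φ (2 ^ (m + 1) * t) = φ (2 * (2 ^ m * t)) := by ring_nf
        _ ≤ k * φ (2 ^ m * t) + C₀ := hkC₀ _ (by positivity)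
        _ ≤ k * (K * φ t + C) + C₀ := by gcongr; exact hKC t ht
        _ = k * K * φ t + (k * C + C₀) := by ring
  obtain ⟨m, hm⟩ := pow_unbounded_of_one_lt |c| (by norm_num : (1 : ℝ) < 2)
  obtain ⟨K, C, hKC⟩ := pow m
  refine ⟨K, C, fun t ht => ?_⟩
  calc φ (c * t) = φ (|c| * t) := by rw [← hφ.map_abs (c * t), abs_mul, abs_of_nonneg ht]
    _ ≤ φ (2 ^ m * t) := hφ.monotoneOn (Set.mem_Ici.2 (by positivity))
        (Set.mem_Ici.2 (by positivity)) (by gcongr)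
    _ ≤ K * φ t + C := hKC t ht

variable {Ω : Type*} {m0 : MeasurableSpace Ω} {μ : Measure Ω} [IsFiniteMeasure μ] {f : Ω → ℝ}
  {α : ℝ}

lemma integrable_comp_mul (hφ : IsYoung φ) (hΔ : Delta2 φ) (hf : AEStronglyMeasurable f μ)
    (hα : 0 < α) (hint : Integrable (fun x => φ (α * |f x|)) μ) (c : ℝ) :
    Integrable (fun x => φ (c * |f x|)) μ := by
  obtain ⟨K, C, hKC⟩ := hφ.exists_map_mul_le hΔ (c / α)
  refine ((hint.const_mul K).add (integrable_const C)).mono'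
    (hφ.continuous.comp_aestronglyMeasurable (hf.norm.const_mul c)) (ae_of_all _ fun x => ?_)
  rw [Real.norm_of_nonneg (hφ.nonneg _)]
  calc φ (c * |f x|) = φ (c / α * (α * |f x|)) := by field_simp
    _ ≤ K * φ (α * |f x|) + C := hKC _ (by positivity)

lemma integrable_of_integrable_comp (hφ : IsYoung φ) (hf : AEStronglyMeasurable f μ)
    (hα : 0 < α) (hint : Integrable (fun x => φ (α * |f x|)) μ) : Integrable f μ := by
  obtain ⟨C, hC⟩ := hφ.le_add_map
  refine (((integrable_const C).add hint).const_mul α⁻¹).mono' hf (ae_of_all _ fun x => ?_)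
  rw [Real.norm_eq_abs, le_inv_mul_iff₀ hα]
  exact hC _ (by positivity)

end IsYoung

section Luxemburg

variable {Ω : Type*} {m0 : MeasurableSpace Ω} {μ : Measure Ω} {φ : ℝ → ℝ}

lemma luxNorm_nonneg (g : Ω → ℝ) : 0 ≤ luxNorm μ φ g :=
  Real.sInf_nonneg fun _ hk => hk.1.le

lemma luxNorm_le {g : Ω → ℝ} {k : ℝ} (hk : 0 < k) (h : ∫ x, φ (|g x| / k) ∂μ ≤ 1) :
    luxNorm μ φ g ≤ k :=
  csInf_le ⟨0, fun _ hk => hk.1.le⟩ ⟨hk, h⟩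

lemma tendsto_luxNorm_zero {ι : Type*} {l : Filter ι} {g : ι → Ω → ℝ}
    (h : ∀ c > 0, Tendsto (fun i => ∫ x, φ (c * |g i x|) ∂μ) l (𝓝 0)) :
    Tendsto (fun i => luxNorm μ φ (g i)) l (𝓝 0) := by
  refine tendsto_order.2 ⟨fun a ha => Eventually.of_forall fun i => ha.trans_le
    (luxNorm_nonneg _), fun ε hε => ?_⟩
  filter_upwards [(h (ε / 2)⁻¹ (by positivity)).eventually (gt_mem_nhds one_pos)] with i hi
  refine (luxNorm_le (by positivity) ?_).trans_lt (half_lt_self hε)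
  simpa only [div_eq_inv_mul] using hi.le

end Luxemburg

namespace MeasureTheory

section

variable {Ω : Type*} {m m0 : MeasurableSpace Ω} {μ : Measure Ω}

lemma TendstoInMeasure.continuous_comp {E F : Type*} [PseudoEMetricSpace E]
    [PseudoEMetricSpace F] [IsFiniteMeasure μ] {f : ℕ → Ω → E} {g : Ω → E} {Φ : E → F}
    (hΦ : Continuous Φ) (hf : ∀ n, AEStronglyMeasurable (f n) μ)
    (hfg : TendstoInMeasure μ f atTop g) :
    TendstoInMeasure μ (fun n x => Φ (f n x)) atTop (fun x => Φ (g x)) := by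
  rw [exists_seq_tendstoInMeasure_atTop_iff fun n => hΦ.comp_aestronglyMeasurable (hf n)]
  intro ns hns
  obtain ⟨ns', hns', h⟩ := (hfg.comp hns.tendsto_atTop).exists_seq_tendsto_ae
  exact ⟨ns', hns', h.mono fun x hx => (hΦ.tendsto _).comp hx⟩

lemma UnifIntegrable.mono {ι E F : Type*} [NormedAddCommGroup E] [NormedAddCommGroup F]
    {p : ℝ≥0∞} {f : ι → Ω → E} {g : ι → Ω → F} (hg : UnifIntegrable g p μ)
    (hfg : ∀ i, ∀ᵐ x ∂μ, ‖f i x‖ ≤ ‖g i x‖) : UnifIntegrable f p μ := by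
  intro ε hε
  obtain ⟨δ, hδ, h⟩ := hg hε
  refine ⟨δ, hδ, fun i s hs hμs => (eLpNorm_mono_ae ?_).trans (h i s hs hμs)⟩
  filter_upwards [hfg i] with x hx
  by_cases hxs : x ∈ s <;> simp [hxs, hx]

lemma eLpNorm_condExp_sub_le {g g' : Ω → ℝ} (hg : Integrable g μ) (hg' : Integrable g' μ) :
    eLpNorm (μ[g|m] - g) 1 μ ≤ 2 * eLpNorm (g - g') 1 μ + eLpNorm (μ[g'|m] - g') 1 μ := by
  have hdecomp : μ[g|m] - g =ᵐ[μ] μ[g - g'|m] + (μ[g'|m] - g') - (g - g') := by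
    filter_upwards [condExp_sub hg hg' m] with x hx
    simp only [Pi.add_apply, Pi.sub_apply, hx]
    ring
  calc eLpNorm (μ[g|m] - g) 1 μ
      = eLpNorm (μ[g - g'|m] + (μ[g'|m] - g') - (g - g')) 1 μ := eLpNorm_congr_ae hdecomp
    _ ≤ eLpNorm (μ[g - g'|m]) 1 μ + eLpNorm (μ[g'|m] - g') 1 μ + eLpNorm (g - g') 1 μ := by
        refine (eLpNorm_sub_le ?_ (hg.sub hg').1 le_rfl).trans ?_
        · exact integrable_condExp.1.add (integrable_condExp.sub hg').1
        · gcongr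
          exact eLpNorm_add_le integrable_condExp.1 (integrable_condExp.sub hg').1 le_rfl
    _ ≤ eLpNorm (g - g') 1 μ + eLpNorm (μ[g'|m] - g') 1 μ + eLpNorm (g - g') 1 μ := by
        gcongr
        exact eLpNorm_condExp_le_eLpNorm _ le_rfl
    _ = 2 * eLpNorm (g - g') 1 μ + eLpNorm (μ[g'|m] - g') 1 μ := by ring

lemma eLpNorm_condExp_indicator_sub_le [IsFiniteMeasure μ] (hm : m ≤ m0) {A D : Set Ω}
    (hA : MeasurableSet[m] A) (hD : MeasurableSet D) (c : ℝ) :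
    eLpNorm (μ[D.indicator fun _ => c|m] - D.indicator fun _ => c) 1 μ ≤
      2 * (‖c‖ₑ * μ (A ∆ D)) := by
  have hint : ∀ s, MeasurableSet s → Integrable (s.indicator fun _ => c) μ :=
    fun s hs => (integrable_const c).indicator hs
  have hcondA : μ[A.indicator fun _ => c|m] = A.indicator fun _ => c :=
    condExp_of_stronglyMeasurable hm (stronglyMeasurable_const.indicator hA) (hint A (hm _ hA))
  have h := eLpNorm_condExp_sub_le (m := m) (hint D hD) (hint A (hm _ hA))
  rwa [hcondA, sub_self, eLpNorm_zero, add_zero, eLpNorm_indicator_sub_indicator,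
    symmDiff_comm, eLpNorm_indicator_const ((hm _ hA).symmDiff hD) one_ne_zero ENNReal.one_ne_top,
    ENNReal.toReal_one, div_one, ENNReal.rpow_one] at h

end

section

variable {Ω : Type*} {m0 : MeasurableSpace Ω} {μ : Measure Ω} [IsFiniteMeasure μ]
  {𝒜 : ℕ → MeasurableSpace Ω} {𝔇 : MeasurableSpace Ω}

def MuConverges (μ : Measure Ω) (𝒜 : ℕ → MeasurableSpace Ω) (𝔇 : MeasurableSpace Ω) : Prop :=
  ∀ D : Set Ω, MeasurableSet[𝔇] D → ∃ As : ℕ → Set Ω,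
    (∀ n, MeasurableSet[𝒜 n] (As n)) ∧ Tendsto (fun n => μ (As n ∆ D)) atTop (𝓝 0)

lemma integrable_simpleFunc_of_le (h𝔇 : 𝔇 ≤ m0) (s : @SimpleFunc Ω 𝔇 ℝ) : Integrable s μ :=
  .of_bound (s.stronglyMeasurable.mono h𝔇).aestronglyMeasurable _
    (ae_of_all _ s.exists_forall_norm_le.choose_spec)

lemma tendsto_eLpNorm_condExp_sub_simpleFunc (h𝒜 : ∀ n, 𝒜 n ≤ m0) (h𝔇 : 𝔇 ≤ m0)
    (hconv : MuConverges μ 𝒜 𝔇) (s : @SimpleFunc Ω 𝔇 ℝ) :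
    Tendsto (fun n => eLpNorm (μ[⇑s|𝒜 n] - ⇑s) 1 μ) atTop (𝓝 0) := by
  induction s using SimpleFunc.induction with
  | @const c D hD =>
    classical
    obtain ⟨As, hAs, hlim⟩ := hconv D hD
    rw [SimpleFunc.coe_piecewise, SimpleFunc.coe_const, SimpleFunc.coe_const,
      Function.const_zero, Set.piecewise_eq_indicator]
    have hbound : Tendsto (fun n => 2 * (‖c‖ₑ * μ (As n ∆ D))) atTop (𝓝 0) := by
      simpa using ENNReal.Tendsto.const_mul
        (ENNReal.Tendsto.const_mul hlim (Or.inr enorm_ne_top)) (Or.inr ENNReal.ofNat_ne_top)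
    exact tendsto_of_tendsto_of_tendsto_of_le_of_le tendsto_const_nhds hbound
      (fun _ => zero_le) fun n => eLpNorm_condExp_indicator_sub_le (h𝒜 n) (hAs n) (h𝔇 _ hD) c
  | @add f g _ hf hg =>
    have hfi := integrable_simpleFunc_of_le (μ := μ) h𝔇 f
    have hgi := integrable_simpleFunc_of_le (μ := μ) h𝔇 g
    have hle : ∀ n, eLpNorm (μ[⇑(f + g)|𝒜 n] - ⇑(f + g)) 1 μ ≤
        eLpNorm (μ[⇑f|𝒜 n] - ⇑f) 1 μ + eLpNorm (μ[⇑g|𝒜 n] - ⇑g) 1 μ := by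
      intro n
      have hsplit : μ[⇑(f + g)|𝒜 n] - ⇑(f + g) =ᵐ[μ] (μ[⇑f|𝒜 n] - ⇑f) + (μ[⇑g|𝒜 n] - ⇑g) := by
        filter_upwards [condExp_add hfi hgi (𝒜 n)] with x hx
        simp only [SimpleFunc.coe_add, Pi.add_apply, Pi.sub_apply] at hx ⊢
        rw [hx]
        ring
      rw [eLpNorm_congr_ae hsplit]
      exact eLpNorm_add_le (integrable_condExp.sub hfi).1 (integrable_condExp.sub hgi).1 le_rfl
    exact tendsto_of_tendsto_of_tendsto_of_le_of_le tendsto_const_nhds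
      (by simpa using hf.add hg) (fun _ => zero_le) hle

lemma tendsto_eLpNorm_condExp_sub (h𝒜 : ∀ n, 𝒜 n ≤ m0) (h𝔇 : 𝔇 ≤ m0)
    (hconv : MuConverges μ 𝒜 𝔇) {f : Ω → ℝ} (hf : StronglyMeasurable[𝔇] f)
    (hfi : Integrable f μ) :
    Tendsto (fun n => eLpNorm (μ[f|𝒜 n] - f) 1 μ) atTop (𝓝 0) := by
  rw [ENNReal.tendsto_nhds_zero]
  intro ε hε
  have hε3 : ε / 3 ≠ 0 := (ENNReal.div_pos hε.ne' ENNReal.ofNat_ne_top).ne'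
  have hfD : MemLp f 1 (μ.trim h𝔇) :=
    ⟨hf.aestronglyMeasurable, by
      rw [eLpNorm_trim h𝔇 hf]
      exact (memLp_one_iff_integrable.2 hfi).2⟩
  obtain ⟨s, hs, -⟩ := hfD.exists_simpleFunc_eLpNorm_sub_lt ENNReal.one_ne_top hε3
  rw [eLpNorm_trim h𝔇 (hf.sub s.stronglyMeasurable)] at hs
  filter_upwards [ENNReal.tendsto_nhds_zero.1
    (tendsto_eLpNorm_condExp_sub_simpleFunc h𝒜 h𝔇 hconv s) _ (pos_iff_ne_zero.2 hε3)] with n hn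
  calc eLpNorm (μ[f|𝒜 n] - f) 1 μ
      ≤ 2 * eLpNorm (f - ⇑s) 1 μ + eLpNorm (μ[⇑s|𝒜 n] - ⇑s) 1 μ :=
        eLpNorm_condExp_sub_le hfi (integrable_simpleFunc_of_le h𝔇 s)
    _ ≤ 2 * (ε / 3) + ε / 3 := by gcongr
    _ = ε := by rw [two_mul, ENNReal.add_thirds]

end

end MeasureTheory

namespace IsYoung

variable {φ : ℝ → ℝ} {Ω : Type*} {m m0 : MeasurableSpace Ω} {μ : Measure Ω} [IsFiniteMeasure μ]
  {f : Ω → ℝ}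

lemma ae_map_mul_abs_condExp_sub_le (hφ : IsYoung φ) (hm : m ≤ m0) (hfi : Integrable f μ)
    {c : ℝ} (hψ : Integrable (fun x => φ (2 * c * f x)) μ) :
    ∀ᵐ x ∂μ, φ (c * |(μ[f|m]) x - f x|) ≤
      ((μ[fun x => φ (2 * c * f x)|m]) x + φ (2 * c * f x)) / 2 := by
  have hconvex : ConvexOn ℝ Set.univ (fun y => φ (2 * c * y)) :=
    hφ.convexOn.comp_linearMap (LinearMap.mulLeft ℝ (2 * c))
  have hcont : Continuous (fun y => φ (2 * c * y)) := hφ.continuous.comp (continuous_const_mul _)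
  filter_upwards [hconvex.map_condExp_le_univ hm hcont.lowerSemicontinuous hfi hψ] with x hx
  calc φ (c * |(μ[f|m]) x - f x|) ≤ (φ (2 * c * (μ[f|m]) x) + φ (2 * c * f x)) / 2 :=
        hφ.map_mul_abs_sub_le _ _ _
    _ ≤ _ := by gcongr; exact hx

lemma tendsto_integral_map_mul_abs_condExp_sub (hφ : IsYoung φ) (hΔ : Delta2 φ)
    {𝒜 : ℕ → MeasurableSpace Ω} (h𝒜 : ∀ n, 𝒜 n ≤ m0) (hfi : Integrable f μ) {α : ℝ}
    (hα : 0 < α) (hint : Integrable (fun x => φ (α * |f x|)) μ)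
    (hL1 : Tendsto (fun n => eLpNorm (μ[f|𝒜 n] - f) 1 μ) atTop (𝓝 0)) (c : ℝ) :
    Tendsto (fun n => ∫ x, φ (c * |(μ[f|𝒜 n]) x - f x|) ∂μ) atTop (𝓝 0) := by
  set F := fun n x => φ (c * |(μ[f|𝒜 n]) x - f x|)
  set ψf := fun x => φ (2 * c * f x)
  have hψf : Integrable ψf μ := (hφ.integrable_comp_mul hΔ hfi.1 hα hint (2 * c)).congr
    (ae_of_all _ fun x => hφ.map_mul_abs _ _)
  set G := fun n => μ[ψf|𝒜 n] + ψf
  have hG : UnifIntegrable G 1 μ :=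
    (hψf.uniformIntegrable_condExp h𝒜).2.1.add
      (unifIntegrable_const le_rfl ENNReal.one_ne_top (memLp_one_iff_integrable.2 hψf)) le_rfl
      (fun _ => integrable_condExp.1) (fun _ => hψf.1)
  have hFG : ∀ n, ∀ᵐ x ∂μ, ‖F n x‖ ≤ ‖G n x‖ := fun n => by
    filter_upwards [hφ.ae_map_mul_abs_condExp_sub_le (h𝒜 n) hfi hψf] with x hx
    have hx' : F n x ≤ G n x / 2 := hx
    rw [Real.norm_of_nonneg (hφ.nonneg _), Real.norm_eq_abs]
    linarith [hφ.nonneg (c * |(μ[f|𝒜 n]) x - f x|), le_abs_self (G n x)]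
  have hdiff : ∀ n, AEStronglyMeasurable (μ[f|𝒜 n] - f) μ := fun _ =>
    (integrable_condExp.sub hfi).1
  have hFm : ∀ n, AEStronglyMeasurable (F n) μ := fun n =>
    hφ.continuous.comp_aestronglyMeasurable ((hdiff n).norm.const_mul c)
  have hF : TendstoInMeasure μ F atTop 0 := by
    have := (tendstoInMeasure_of_tendsto_eLpNorm one_ne_zero hdiff
      aestronglyMeasurable_zero (by simpa using hL1)).continuous_comp (Φ := fun y => φ (c * |y|))
      (hφ.continuous.comp (continuous_const.mul continuous_abs)) hdiff
    simp only [Pi.zero_apply, abs_zero, mul_zero, hφ.map_zero] at this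
    exact this
  simpa using tendsto_integral_of_L1' 0 aestronglyMeasurable_zero
    (Eventually.of_forall fun n => (integrable_condExp.add hψf).mono (hFm n) (hFG n))
    (tendsto_Lp_finite_of_tendstoInMeasure le_rfl ENNReal.one_ne_top hFm MemLp.zero
      (hG.mono hFG) hF)

end IsYoung

theorem stmt_7 {Ω : Type*} {m0 : MeasurableSpace Ω} (μ : Measure Ω) [IsFiniteMeasure μ]
    (φ : ℝ → ℝ) (hφ : IsYoung φ) (hΔ₂ : Delta2 φ)
    (𝒜 : ℕ → MeasurableSpace Ω) (h𝒜 : ∀ n, 𝒜 n ≤ m0)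
    (𝔇 : MeasurableSpace Ω) (h𝔇 : 𝔇 ≤ m0)
    (hconv : ∀ D : Set Ω, MeasurableSet[𝔇] D → ∃ As : ℕ → Set Ω,
      (∀ n, MeasurableSet[𝒜 n] (As n)) ∧
      Tendsto (fun n => μ (symmDiff (As n) D)) atTop (𝓝 0))
    (f : Ω → ℝ) (hf : StronglyMeasurable[𝔇] f)
    (hfφ : ∃ α > 0, Integrable (fun x => φ (α * |f x|)) μ) :
    Tendsto (fun n => luxNorm μ φ (fun x => (μ[f | 𝒜 n]) x - f x)) atTop (𝓝 0) := by
  obtain ⟨α, hα, hint⟩ := hfφ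
  have hfi : Integrable f μ :=
    hφ.integrable_of_integrable_comp (hf.mono h𝔇).aestronglyMeasurable hα hint
  have hL1 := tendsto_eLpNorm_condExp_sub h𝒜 h𝔇 hconv hf hfi
  exact tendsto_luxNorm_zero fun c _ =>
    hφ.tendsto_integral_map_mul_abs_condExp_sub hΔ₂ h𝒜 hfi hα hint hL1 c
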